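/- arXiv:1212.3949 — 2 statements merged into one kernel-verified Lean document; each statement's English description precedes it below -/
import Mathlib

section
/- Let M be a Γ-semiring, B a generalized bi-Γ-ideal of M, and A a nonempty subset of M. Then AΓB is a generalized bi-Γ-ideal of M. -/
/-- A Γ-semiring: additive commutative semigroups `M` and `G` with a triple
product `M → G → M → M` satisfying distributivity and associativity laws. -/
structure GammaSemiring (M G : Type*) [AddCommSemigroup M] [AddCommSemigroup G] where
  tmul : M → G → M → M
  left_distrib : ∀ a γ b c, tmul a γ (b + c) = tmul a γ b + tmul a γ c
  right_distrib : ∀ a b γ c, tmul (a + b) γ c = tmul a γ c + tmul b γ c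
  gamma_distrib : ∀ a γ δ b, tmul a (γ + δ) b = tmul a γ b + tmul a δ b
  mul_assoc : ∀ a γ b δ c, tmul (tmul a γ b) δ c = tmul a γ (tmul b δ c)

namespace GammaSemiring

variable {M G : Type*} [AddCommSemigroup M] [AddCommSemigroup G]

/-- `AΓB`: the set of all finite (nonempty) sums `Σᵢ aᵢγᵢbᵢ` with `aᵢ ∈ A`,
`γᵢ ∈ Γ`, `bᵢ ∈ B`, realized as the additive subsemigroup closure of the set
of single products. -/
def sprod (gs : GammaSemiring M G) (A B : Set M) : Set M :=
  (AddSubsemigroup.closure {x | ∃ a ∈ A, ∃ γ : G, ∃ b ∈ B, x = gs.tmul a γ b} :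
    AddSubsemigroup M)

/-- A generalized bi-Γ-ideal of `M`: a nonempty subset `A` with `AΓMΓA ⊆ A`. -/
def IsGenBiIdeal (gs : GammaSemiring M G) (A : Set M) : Prop :=
  A.Nonempty ∧ gs.sprod (gs.sprod A Set.univ) A ⊆ A

/-- A sub-Γ-semiring: nonempty, closed under addition and the Γ-product. -/
def IsSubGammaSemiring (gs : GammaSemiring M G) (T : Set M) : Prop :=
  T.Nonempty ∧ (∀ a ∈ T, ∀ b ∈ T, a + b ∈ T) ∧
    ∀ a ∈ T, ∀ γ : G, ∀ b ∈ T, gs.tmul a γ b ∈ T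

/-- A generalized bi-Γ-ideal of the Γ-semiring `T` (a subset of `M`):
a nonempty subset `A ⊆ T` with `AΓTΓA ⊆ A`. -/
def IsGenBiIdealIn (gs : GammaSemiring M G) (T A : Set M) : Prop :=
  A.Nonempty ∧ A ⊆ T ∧ gs.sprod (gs.sprod A T) A ⊆ A

/-- A Γ-ideal of `M`. -/
def IsGammaIdeal (gs : GammaSemiring M G) (A : Set M) : Prop :=
  A.Nonempty ∧ (∀ a ∈ A, ∀ b ∈ A, a + b ∈ A) ∧
    ∀ a ∈ A, ∀ γ : G, ∀ x : M, gs.tmul x γ a ∈ A ∧ gs.tmul a γ x ∈ A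

/-- A quasi-Γ-ideal of `M`: a sub-Γ-semiring `A` with `AΓM ∩ MΓA ⊆ A`. -/
def IsQuasiGammaIdeal (gs : GammaSemiring M G) (A : Set M) : Prop :=
  gs.IsSubGammaSemiring A ∧ gs.sprod A Set.univ ∩ gs.sprod Set.univ A ⊆ A

/-- A bi-Γ-ideal of `M`: a sub-Γ-semiring `A` with `AΓMΓA ⊆ A`. -/
def IsBiIdeal (gs : GammaSemiring M G) (A : Set M) : Prop :=
  gs.IsSubGammaSemiring A ∧ gs.sprod (gs.sprod A Set.univ) A ⊆ A

/-- `M` is GB-simple: `M` is its unique generalized bi-Γ-ideal. -/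
def GBSimple (gs : GammaSemiring M G) : Prop :=
  ∀ A : Set M, gs.IsGenBiIdeal A → A = Set.univ

/-- The sub-Γ-semiring `T`, regarded as a Γ-semiring, is GB-simple. -/
def GBSimpleIn (gs : GammaSemiring M G) (T : Set M) : Prop :=
  ∀ A : Set M, gs.IsGenBiIdealIn T A → A = T

end GammaSemiring

/-! Since the Γ-product of subsets is associative, `(AΓB)ΓMΓ(AΓB) = AΓ((BΓMΓA)ΓB)`, and
`BΓMΓA ⊆ BΓM` gives `AΓ((BΓMΓA)ΓB) ⊆ AΓ(BΓMΓB) ⊆ AΓB`. -/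

namespace GammaSemiring

variable {M G : Type*} [AddCommSemigroup M] [AddCommSemigroup G]
  (gs : GammaSemiring M G) {A B C : Set M}

lemma tmul_mem_sprod {a b : M} (ha : a ∈ A) (γ : G) (hb : b ∈ B) :
    gs.tmul a γ b ∈ gs.sprod A B :=
  AddSubsemigroup.subset_closure ⟨a, ha, γ, b, hb, rfl⟩

lemma add_mem_sprod {x y : M} (hx : x ∈ gs.sprod A B) (hy : y ∈ gs.sprod A B) :
    x + y ∈ gs.sprod A B :=
  AddSubsemigroup.add_mem _ hx hy

lemma sprod_subset {S : Set M} (hmem : ∀ a ∈ A, ∀ γ : G, ∀ b ∈ B, gs.tmul a γ b ∈ S)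
    (hadd : ∀ x ∈ S, ∀ y ∈ S, x + y ∈ S) : gs.sprod A B ⊆ S :=
  (AddSubsemigroup.closure_le (S := ⟨S, fun hx hy => hadd _ hx _ hy⟩)).2
    fun _ ⟨a, ha, γ, b, hb, hx⟩ => hx ▸ hmem a ha γ b hb

lemma sprod_nonempty [Nonempty G] (hA : A.Nonempty) (hB : B.Nonempty) :
    (gs.sprod A B).Nonempty := by
  obtain ⟨a, ha⟩ := hA
  obtain ⟨b, hb⟩ := hB
  exact ⟨_, gs.tmul_mem_sprod ha (Classical.arbitrary G) hb⟩

lemma sprod_subset_sprod_of_tmul_mem {C D : Set M}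
    (h : ∀ a ∈ A, ∀ γ : G, ∀ b ∈ B, gs.tmul a γ b ∈ gs.sprod C D) :
    gs.sprod A B ⊆ gs.sprod C D :=
  gs.sprod_subset h fun _ hx _ hy => gs.add_mem_sprod hx hy

lemma sprod_subset_sprod {A' B' : Set M} (hA : A ⊆ A') (hB : B ⊆ B') :
    gs.sprod A B ⊆ gs.sprod A' B' :=
  gs.sprod_subset_sprod_of_tmul_mem fun _ ha γ _ hb => gs.tmul_mem_sprod (hA ha) γ (hB hb)

lemma tmul_mem_sprod_sprod_of_mem_sprod_left {x c : M} (hx : x ∈ gs.sprod A B) (γ : G)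
    (hc : c ∈ C) : gs.tmul x γ c ∈ gs.sprod A (gs.sprod B C) :=
  gs.sprod_subset (S := {x | gs.tmul x γ c ∈ gs.sprod A (gs.sprod B C)})
    (fun a ha δ b hb => by
      simpa only [Set.mem_ofPred_eq, gs.mul_assoc] using
        gs.tmul_mem_sprod ha δ (gs.tmul_mem_sprod hb γ hc))
    (fun x hx y hy => by
      simpa only [Set.mem_ofPred_eq, gs.right_distrib] using gs.add_mem_sprod hx hy)
    hx

lemma tmul_mem_sprod_sprod_of_mem_sprod_right {a y : M} (ha : a ∈ A) (γ : G)
    (hy : y ∈ gs.sprod B C) : gs.tmul a γ y ∈ gs.sprod (gs.sprod A B) C :=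
  gs.sprod_subset (S := {y | gs.tmul a γ y ∈ gs.sprod (gs.sprod A B) C})
    (fun b hb δ c hc => by
      simpa only [Set.mem_ofPred_eq, ← gs.mul_assoc] using
        gs.tmul_mem_sprod (gs.tmul_mem_sprod ha γ hb) δ hc)
    (fun x hx y hy => by
      simpa only [Set.mem_ofPred_eq, gs.left_distrib] using gs.add_mem_sprod hx hy)
    hy

lemma sprod_assoc (A B C : Set M) :
    gs.sprod (gs.sprod A B) C = gs.sprod A (gs.sprod B C) :=
  (gs.sprod_subset_sprod_of_tmul_mem fun _ hx γ _ hc =>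
    gs.tmul_mem_sprod_sprod_of_mem_sprod_left hx γ hc).antisymm
  (gs.sprod_subset_sprod_of_tmul_mem fun _ ha γ _ hy =>
    gs.tmul_mem_sprod_sprod_of_mem_sprod_right ha γ hy)

end GammaSemiring

open GammaSemiring

variable {M G : Type*} [AddCommSemigroup M] [AddCommSemigroup G]

theorem stmt14 [Nonempty G] (gs : GammaSemiring M G) (B : Set M)
    (hB : gs.IsGenBiIdeal B) (A : Set M) (hA : A.Nonempty) :
    gs.IsGenBiIdeal (gs.sprod A B) := by
  refine ⟨gs.sprod_nonempty hA hB.1, ?_⟩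
  have hBMA : gs.sprod (gs.sprod B Set.univ) A ⊆ gs.sprod B Set.univ := by
    rw [gs.sprod_assoc]
    exact gs.sprod_subset_sprod subset_rfl (Set.subset_univ _)
  calc gs.sprod (gs.sprod (gs.sprod A B) Set.univ) (gs.sprod A B)
      = gs.sprod A (gs.sprod (gs.sprod (gs.sprod B Set.univ) A) B) := by
        simp only [gs.sprod_assoc]
    _ ⊆ gs.sprod A (gs.sprod (gs.sprod B Set.univ) B) :=
        gs.sprod_subset_sprod subset_rfl (gs.sprod_subset_sprod hBMA subset_rfl)
    _ ⊆ gs.sprod A B := gs.sprod_subset_sprod subset_rfl hB.2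
end

section
/- Let M be a Γ-semiring having a proper generalized bi-Γ-ideal. Then every proper generalized bi-Γ-ideal of M is minimal if and only if the intersection of any two distinct proper generalized bi-Γ-ideals of M is empty. -/
open GammaSemiring

variable {M G : Type*} [AddCommSemigroup M] [AddCommSemigroup G]

namespace GammaSemiring

theorem sprod_mono (gs : GammaSemiring M G) {A A' B B' : Set M}
    (hA : A ⊆ A') (hB : B ⊆ B') : gs.sprod A B ⊆ gs.sprod A' B' := by
  apply AddSubsemigroup.closure_mono
  rintro x ⟨a, ha, γ, b, hb, rfl⟩
  exact ⟨a, hA ha, γ, b, hB hb, rfl⟩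

theorem IsGenBiIdeal.inter {gs : GammaSemiring M G} {A B : Set M}
    (hA : gs.IsGenBiIdeal A) (hB : gs.IsGenBiIdeal B) (hAB : (A ∩ B).Nonempty) :
    gs.IsGenBiIdeal (A ∩ B) :=
  ⟨hAB, fun _ hx =>
    ⟨hA.2 (gs.sprod_mono (gs.sprod_mono Set.inter_subset_left subset_rfl)
        Set.inter_subset_left hx),
      hB.2 (gs.sprod_mono (gs.sprod_mono Set.inter_subset_right subset_rfl)
        Set.inter_subset_right hx)⟩⟩

end GammaSemiring

theorem stmt17_general (gs : GammaSemiring M G) :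
    (∀ B : Set M, gs.IsGenBiIdeal B → B ≠ Set.univ →
        ∀ C : Set M, gs.IsGenBiIdeal C → C ⊆ B → C = B) ↔
      (∀ B₁ B₂ : Set M, gs.IsGenBiIdeal B₁ → B₁ ≠ Set.univ →
        gs.IsGenBiIdeal B₂ → B₂ ≠ Set.univ → B₁ ≠ B₂ → B₁ ∩ B₂ = ∅) := by
  constructor
  · intro hmin B₁ B₂ h₁ h₁p h₂ h₂p hne
    by_contra hmeet
    have hI := h₁.inter h₂ (Set.nonempty_iff_ne_empty.mpr hmeet)
    have e₁ : B₁ ∩ B₂ = B₁ := hmin B₁ h₁ h₁p _ hI Set.inter_subset_left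
    have e₂ : B₁ ∩ B₂ = B₂ := hmin B₂ h₂ h₂p _ hI Set.inter_subset_right
    exact hne (e₁.symm.trans e₂)
  · intro hdisj B hB hBp C hC hCB
    by_contra hne
    have hCp : C ≠ Set.univ := fun hCu => hBp (Set.univ_subset_iff.mp (hCu ▸ hCB))
    have hempty := hdisj C B hC hCp hB hBp hne
    rw [Set.inter_eq_self_of_subset_left hCB] at hempty
    exact hC.1.ne_empty hempty

theorem stmt17 (gs : GammaSemiring M G)
    (h : ∃ B : Set M, gs.IsGenBiIdeal B ∧ B ≠ Set.univ) :
    (∀ B : Set M, gs.IsGenBiIdeal B → B ≠ Set.univ →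
        ∀ C : Set M, gs.IsGenBiIdeal C → C ⊆ B → C = B) ↔
      (∀ B₁ B₂ : Set M, gs.IsGenBiIdeal B₁ → B₁ ≠ Set.univ →
        gs.IsGenBiIdeal B₂ → B₂ ≠ Set.univ → B₁ ≠ B₂ → B₁ ∩ B₂ = ∅) :=
  stmt17_general gs
end
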